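/- Let (X,A) be a metric pair with X complete separable proper and p ∈ [1,∞). Then Wb_p satisfies the triangle inequality on M_p(X,A): for all μ¹, μ², μ³ ∈ M_p(X,A), Wb_p(μ¹,μ³) ≤ Wb_p(μ¹,μ²) + Wb_p(μ²,μ³). -/

import Mathlib

/-!
Given admissible plans `γ₁₂ ∈ Adm(μ₁, μ₂)` and `γ₂₃ ∈ Adm(μ₂, μ₃)`, disintegrate their parts over
`Ω = X \ A` along the common marginal `μ₂` and glue them into a measure `π` on `X³`; the mass either
plan exchanges with `A` is routed through the diagonal of `A × A`, where it costs nothing. The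
`(1, 3)`-marginal of `π`, with `A × A` removed, is admissible for `(μ₁, μ₃)`, and Minkowski's
inequality in `L^p(π)` with the triangle inequality for `d` bounds its cost by
`cost(γ₁₂)^(1/p) + cost(γ₂₃)^(1/p)`.
-/

open MeasureTheory Metric Set ENNReal Filter

noncomputable def ptCost {X : Type*} [PseudoMetricSpace X] [MeasurableSpace X]
    (p : ℝ) (γ : Measure (X × X)) : ℝ≥0∞ :=
  ∫⁻ z, ENNReal.ofReal (dist z.1 z.2 ^ p) ∂γ

def ptAdm {X : Type*} [MeasurableSpace X] (A : Set X) (μ ν : Measure X) :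
    Set (Measure (X × X)) :=
  {γ | γ (A ×ˢ A) = 0 ∧ (γ.map Prod.fst).restrict Aᶜ = μ ∧ (γ.map Prod.snd).restrict Aᶜ = ν}

noncomputable def WbPow {X : Type*} [PseudoMetricSpace X] [MeasurableSpace X]
    (p : ℝ) (A : Set X) (μ ν : Measure X) : ℝ≥0∞ :=
  ⨅ γ ∈ ptAdm A μ ν, ptCost p γ

noncomputable def Wb {X : Type*} [PseudoMetricSpace X] [MeasurableSpace X]
    (p : ℝ) (A : Set X) (μ ν : Measure X) : ℝ≥0∞ :=
  WbPow p A μ ν ^ (1 / p)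

def MemMp {X : Type*} [PseudoMetricSpace X] [MeasurableSpace X] (p : ℝ) (A : Set X)
    (μ : Measure X) : Prop :=
  μ A = 0 ∧ IsLocallyFiniteMeasure μ ∧
    ∫⁻ x, ENNReal.ofReal (Metric.infDist x A ^ p) ∂μ ≠ ⊤

open ProbabilityTheory

namespace MeasureTheory.Measure

variable {α β Ω : Type*} [MeasurableSpace α] [MeasurableSpace β] [MeasurableSpace Ω]

lemma map_compProd_comap_snd (ρ : Measure (α × β)) [SFinite ρ] (κ : Kernel β Ω)
    [IsSFiniteKernel κ] :
    (ρ ⊗ₘ κ.comap Prod.snd measurable_snd).map (fun z => (z.1.2, z.2)) =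
      ρ.map Prod.snd ⊗ₘ κ := by
  ext s hs
  rw [map_apply (by fun_prop) hs, compProd_apply (hs.preimage (by fun_prop)),
    compProd_apply hs, lintegral_map (Kernel.measurable_kernel_prodMk_left hs) measurable_snd]
  rfl

lemma sum_restrict_preimage_eq_self {s : ℕ → Set β} (hs : ∀ n, MeasurableSet (s n))
    (hd : Pairwise (Function.onFun Disjoint s)) (hU : ⋃ n, s n = univ) {f : α → β}
    (hf : Measurable f) (ρ : Measure α) :
    Measure.sum (fun n => ρ.restrict (f ⁻¹' s n)) = ρ := by
  rw [← restrict_iUnion (fun i j hij => (hd hij).preimage f) fun n => hf (hs n),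
    ← preimage_iUnion, hU, preimage_univ, restrict_univ]

variable [StandardBorelSpace Ω] [Nonempty Ω]

lemma exists_gluing_of_isFiniteMeasure (ρ : Measure (α × β)) [SFinite ρ]
    (ρ' : Measure (β × Ω)) [IsFiniteMeasure ρ'] (h : ρ.map Prod.snd = ρ'.map Prod.fst) :
    ∃ π : Measure ((α × β) × Ω),
      π.map Prod.fst = ρ ∧ π.map (fun z => (z.1.2, z.2)) = ρ' :=
  ⟨ρ ⊗ₘ ρ'.condKernel.comap Prod.snd measurable_snd, fst_compProd _ _, by
    rw [map_compProd_comap_snd, h]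
    exact ρ'.disintegrate ρ'.condKernel⟩

/-- Only finite measures can be disintegrated, so glue over a partition of `β` into sets of finite
`μ`-measure. -/
lemma exists_gluing (μ : Measure β) [SigmaFinite μ] (ρ : Measure (α × β))
    (ρ' : Measure (β × Ω)) (hρ : ρ.map Prod.snd = μ) (hρ' : ρ'.map Prod.fst = μ) :
    ∃ π : Measure ((α × β) × Ω),
      π.map Prod.fst = ρ ∧ π.map (fun z => (z.1.2, z.2)) = ρ' := by
  set B := disjointed (spanningSets μ)
  have hB : ∀ n, MeasurableSet (B n) :=
    .disjointed fun n => measurableSet_spanningSets μ n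
  have hBU : ⋃ n, B n = univ := by rw [iUnion_disjointed, iUnion_spanningSets]
  have : SigmaFinite ρ := .of_map ρ measurable_snd.aemeasurable (hρ ▸ inferInstance)
  have piece : ∀ n, ∃ π : Measure ((α × β) × Ω),
      π.map Prod.fst = ρ.restrict (Prod.snd ⁻¹' B n) ∧
        π.map (fun z => (z.1.2, z.2)) = ρ'.restrict (Prod.fst ⁻¹' B n) := fun n => by
    have : IsFiniteMeasure (ρ'.restrict (Prod.fst ⁻¹' B n)) := by
      refine ⟨?_⟩
      rw [restrict_apply_univ, ← map_apply measurable_fst (hB n), hρ']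
      exact (measure_mono (disjointed_subset _ n)).trans_lt (measure_spanningSets_lt_top μ n)
    refine exists_gluing_of_isFiniteMeasure _ _ ?_
    rw [← restrict_map measurable_snd (hB n), ← restrict_map measurable_fst (hB n), hρ, hρ']
  choose π hπ₁₂ hπ₂₃ using piece
  refine ⟨Measure.sum π, ?_, ?_⟩
  · rw [map_sum measurable_fst.aemeasurable]
    simp only [hπ₁₂]
    exact sum_restrict_preimage_eq_self hB (disjoint_disjointed _) hBU measurable_snd ρ
  · rw [map_sum (by fun_prop)]
    simp only [hπ₂₃]
    exact sum_restrict_preimage_eq_self hB (disjoint_disjointed _) hBU measurable_fst ρ'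

end MeasureTheory.Measure

/-- Mass that a coupling sends into `A` is parked on the diagonal of `A × A`, so only the parts of
`γ₁₂` and `γ₂₃` whose middle coordinate lies off `A` have to be glued. -/
lemma exists_gluing_add_diagonal {X : Type*} [MeasurableSpace X] [StandardBorelSpace X]
    [Nonempty X] {A : Set X} (hA : MeasurableSet A) (μ : Measure X) [SigmaFinite μ]
    (γ₁₂ γ₂₃ : Measure (X × X)) (h₁₂ : (γ₁₂.map Prod.snd).restrict Aᶜ = μ)
    (h₂₃ : (γ₂₃.map Prod.fst).restrict Aᶜ = μ) :
    ∃ (π : Measure ((X × X) × X)) (σ₁₂ σ₂₃ : Measure X), σ₁₂ Aᶜ = 0 ∧ σ₂₃ Aᶜ = 0 ∧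
      π.map Prod.fst = γ₁₂ + σ₁₂.map (fun x => (x, x)) ∧
      π.map (fun z => (z.1.2, z.2)) = γ₂₃ + σ₂₃.map (fun x => (x, x)) := by
  obtain ⟨π, hπ₁₂, hπ₂₃⟩ := Measure.exists_gluing μ (γ₁₂.restrict (Prod.snd ⁻¹' Aᶜ))
    (γ₂₃.restrict (Prod.fst ⁻¹' Aᶜ)) (by rw [← Measure.restrict_map measurable_snd hA.compl, h₁₂])
    (by rw [← Measure.restrict_map measurable_fst hA.compl, h₂₃])
  refine ⟨π + (γ₁₂.restrict (Prod.snd ⁻¹' A)).map (fun q => (q, q.2))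
      + (γ₂₃.restrict (Prod.fst ⁻¹' A)).map (fun q => ((q.1, q.1), q.2)),
    (γ₂₃.map Prod.fst).restrict A, (γ₁₂.map Prod.snd).restrict A, ?_, ?_, ?_, ?_⟩
  iterate 2 rw [Measure.restrict_apply' hA, compl_inter_self, measure_empty]
  · rw [Measure.map_add _ _ measurable_fst, Measure.map_add _ _ measurable_fst, hπ₁₂,
      Measure.map_map measurable_fst (by fun_prop), Measure.map_map measurable_fst (by fun_prop),
      Measure.restrict_map measurable_fst hA, Measure.map_map (by fun_prop) measurable_fst]
    simp only [Function.comp_def, Measure.map_id']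
    rw [preimage_compl, Measure.restrict_compl_add_restrict (measurable_snd hA)]
  · rw [Measure.map_add _ _ (by fun_prop), Measure.map_add _ _ (by fun_prop), hπ₂₃,
      Measure.map_map (by fun_prop) (by fun_prop), Measure.map_map (by fun_prop) (by fun_prop),
      Measure.restrict_map measurable_snd hA, Measure.map_map (by fun_prop) measurable_snd]
    simp only [Function.comp_def, Measure.map_id']
    rw [add_right_comm, preimage_compl, Measure.restrict_compl_add_restrict (measurable_fst hA)]

section Admissible

variable {X : Type*} [MeasurableSpace X] {A : Set X}

lemma map_fst_restrict_compl_prod (hA : MeasurableSet A) (ν : Measure (X × X)) :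
    ((ν.restrict (A ×ˢ A)ᶜ).map Prod.fst).restrict Aᶜ = (ν.map Prod.fst).restrict Aᶜ := by
  have hsub : Prod.fst ⁻¹' Aᶜ ⊆ (A ×ˢ A)ᶜ := fun _ hq h => hq h.1
  rw [Measure.restrict_map measurable_fst hA.compl, Measure.restrict_map measurable_fst hA.compl,
    Measure.restrict_restrict (measurable_fst hA.compl), inter_eq_left.mpr hsub]

lemma map_snd_restrict_compl_prod (hA : MeasurableSet A) (ν : Measure (X × X)) :
    ((ν.restrict (A ×ˢ A)ᶜ).map Prod.snd).restrict Aᶜ = (ν.map Prod.snd).restrict Aᶜ := by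
  have hsub : Prod.snd ⁻¹' Aᶜ ⊆ (A ×ˢ A)ᶜ := fun _ hq h => hq h.2
  rw [Measure.restrict_map measurable_snd hA.compl, Measure.restrict_map measurable_snd hA.compl,
    Measure.restrict_restrict (measurable_snd hA.compl), inter_eq_left.mpr hsub]

lemma restrict_map_outer_mem_ptAdm (hA : MeasurableSet A) {μ₁ μ₂ μ₃ : Measure X}
    {γ₁₂ γ₂₃ : Measure (X × X)} (h₁₂ : γ₁₂ ∈ ptAdm A μ₁ μ₂) (h₂₃ : γ₂₃ ∈ ptAdm A μ₂ μ₃)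
    {π : Measure ((X × X) × X)} {σ₁₂ σ₂₃ : Measure X} (hσ₁₂ : σ₁₂ Aᶜ = 0) (hσ₂₃ : σ₂₃ Aᶜ = 0)
    (hπ₁₂ : π.map Prod.fst = γ₁₂ + σ₁₂.map fun x => (x, x))
    (hπ₂₃ : π.map (fun z => (z.1.2, z.2)) = γ₂₃ + σ₂₃.map fun x => (x, x)) :
    (π.map fun z => (z.1.1, z.2)).restrict (A ×ˢ A)ᶜ ∈ ptAdm A μ₁ μ₃ := by
  refine ⟨by simp [Measure.restrict_apply (hA.prod hA)], ?_, ?_⟩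
  · rw [map_fst_restrict_compl_prod hA, Measure.map_map measurable_fst (by fun_prop),
      show Prod.fst ∘ (fun z : (X × X) × X => (z.1.1, z.2)) = Prod.fst ∘ Prod.fst from rfl,
      ← Measure.map_map measurable_fst measurable_fst, hπ₁₂,
      Measure.map_add _ _ measurable_fst, Measure.map_map measurable_fst (by fun_prop)]
    simp [Function.comp_def, h₁₂.2.1, Measure.restrict_eq_zero.mpr hσ₁₂]
  · rw [map_snd_restrict_compl_prod hA, Measure.map_map measurable_snd (by fun_prop),
      show Prod.snd ∘ (fun z : (X × X) × X => (z.1.1, z.2))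
        = Prod.snd ∘ (fun z : (X × X) × X => (z.1.2, z.2)) from rfl,
      ← Measure.map_map measurable_snd (by fun_prop), hπ₂₃,
      Measure.map_add _ _ measurable_snd, Measure.map_map measurable_snd (by fun_prop)]
    simp [Function.comp_def, h₂₃.2.2, Measure.restrict_eq_zero.mpr hσ₂₃]

end Admissible

section Cost

variable {X : Type*} [PseudoMetricSpace X] [MeasurableSpace X] {p : ℝ}

lemma ptCost_add (γ γ' : Measure (X × X)) : ptCost p (γ + γ') = ptCost p γ + ptCost p γ' :=
  lintegral_add_measure _ _ _

lemma ptCost_mono {γ γ' : Measure (X × X)} (h : γ ≤ γ') : ptCost p γ ≤ ptCost p γ' :=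
  lintegral_mono' h le_rfl

variable [OpensMeasurableSpace X] [SecondCountableTopology X]

lemma ptCost_map {Y : Type*} [MeasurableSpace Y] (hp : 0 ≤ p) {f : Y → X × X}
    (hf : Measurable f) (m : Measure Y) :
    ptCost p (m.map f) = ∫⁻ y, ENNReal.ofReal (dist (f y).1 (f y).2) ^ p ∂m := by
  rw [ptCost, lintegral_map ((measurable_fst.dist measurable_snd).pow_const p).ennreal_ofReal hf]
  simp_rw [ofReal_rpow_of_nonneg dist_nonneg hp]

lemma ptCost_map_diag (hp : 0 < p) (σ : Measure X) : ptCost p (σ.map fun x => (x, x)) = 0 := by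
  rw [ptCost_map hp.le (f := fun x => (x, x)) (by fun_prop)]
  simp [hp]

lemma ptCost_map_outer_rpow_le (hp : 1 ≤ p) (m : Measure ((X × X) × X)) :
    ptCost p (m.map fun z => (z.1.1, z.2)) ^ (1 / p) ≤
      ptCost p (m.map Prod.fst) ^ (1 / p) + ptCost p (m.map fun z => (z.1.2, z.2)) ^ (1 / p) := by
  have hp0 : 0 ≤ p := zero_le_one.trans hp
  rw [ptCost_map hp0 (by fun_prop), ptCost_map hp0 measurable_fst, ptCost_map hp0 (by fun_prop)]
  calc _ ≤ (∫⁻ z, (ENNReal.ofReal (dist z.1.1 z.1.2) + ENNReal.ofReal (dist z.1.2 z.2)) ^ p ∂m)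
        ^ (1 / p) := by
        gcongr with z
        exact (ofReal_le_ofReal (dist_triangle _ _ _)).trans ofReal_add_le
    _ ≤ _ := lintegral_Lp_add_le (by fun_prop) (by fun_prop) hp

end Cost

lemma Wb_eq_iInf {X : Type*} [PseudoMetricSpace X] [MeasurableSpace X] {p : ℝ} (hp : 0 < p)
    (A : Set X) (μ ν : Measure X) :
    Wb p A μ ν = ⨅ γ ∈ ptAdm A μ ν, ptCost p γ ^ (1 / p) :=
  (ENNReal.orderIsoRpow (1 / p) (by positivity)).map_iInf₂ _

theorem wb_triangle_inequality_general
    {X : Type*} [MetricSpace X] [CompleteSpace X] [TopologicalSpace.SeparableSpace X]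
    [MeasurableSpace X] [BorelSpace X]
    (A : Set X) (hA : IsClosed A) (hne : A.Nonempty)
    (p : ℝ) (hp : 1 ≤ p)
    (μ₁ μ₂ μ₃ : Measure X)
    (h₂ : MemMp p A μ₂) :
    Wb p A μ₁ μ₃ ≤ Wb p A μ₁ μ₂ + Wb p A μ₂ μ₃ := by
  have : Nonempty X := ⟨hne.some⟩
  have : SigmaFinite μ₂ := by have := h₂.2.1; infer_instance
  have hp0 : 0 < p := zero_lt_one.trans_le hp
  simp only [Wb_eq_iInf hp0]
  refine le_iInf₂_add_iInf₂ fun γ₁₂ h₁₂ γ₂₃ h₂₃ => ?_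
  obtain ⟨π, σ₁₂, σ₂₃, hσ₁₂, hσ₂₃, hπ₁₂, hπ₂₃⟩ :=
    exists_gluing_add_diagonal hA.measurableSet μ₂ γ₁₂ γ₂₃ h₁₂.2.2 h₂₃.2.1
  calc _ ≤ ptCost p ((π.map fun z => (z.1.1, z.2)).restrict (A ×ˢ A)ᶜ) ^ (1 / p) :=
        iInf₂_le _ (restrict_map_outer_mem_ptAdm hA.measurableSet h₁₂ h₂₃ hσ₁₂ hσ₂₃ hπ₁₂ hπ₂₃)
    _ ≤ ptCost p (π.map fun z => (z.1.1, z.2)) ^ (1 / p) := by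
        gcongr
        exact ptCost_mono Measure.restrict_le_self
    _ ≤ ptCost p (π.map Prod.fst) ^ (1 / p) + ptCost p (π.map fun z => (z.1.2, z.2)) ^ (1 / p) :=
        ptCost_map_outer_rpow_le hp π
    _ = ptCost p γ₁₂ ^ (1 / p) + ptCost p γ₂₃ ^ (1 / p) := by
        rw [hπ₁₂, hπ₂₃, ptCost_add, ptCost_add, ptCost_map_diag hp0, ptCost_map_diag hp0,
          add_zero, add_zero]

theorem wb_triangle_inequality
    {X : Type*} [MetricSpace X] [CompleteSpace X] [TopologicalSpace.SeparableSpace X]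
    [ProperSpace X] [MeasurableSpace X] [BorelSpace X]
    (A : Set X) (hA : IsClosed A) (hne : A.Nonempty)
    (p : ℝ) (hp : 1 ≤ p)
    (μ₁ μ₂ μ₃ : Measure X)
    (h₁ : MemMp p A μ₁) (h₂ : MemMp p A μ₂) (h₃ : MemMp p A μ₃) :
    Wb p A μ₁ μ₃ ≤ Wb p A μ₁ μ₂ + Wb p A μ₂ μ₃ :=
  wb_triangle_inequality_general A hA hne p hp μ₁ μ₂ μ₃ h₂
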